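/- arXiv:1206.3125 — 2 statements merged into one kernel-verified Lean document; each statement's English description precedes it below -/
import Mathlib

section
/- Let P be a probability measure on ℝ^k × ℝ for a random pair (U, V) such that the conditional density f_{V|U} is uniformly bounded by M. Let 𝓕 be a class of real-valued functions on ℝ^k. Then the class 𝓖 := {(u,v) ↦ 1{v ≤ f(u)} : f ∈ 𝓕} satisfies N_{[]}(𝓖, ε, L²(P)) ≤ N_{[]}(𝓕, Cε², ‖·‖_∞) for some constant C depending only on M. -/
/-!
If `l ≤ f ≤ u` with `u - l ≤ r` uniformly, then `1{v ≤ l x} ≤ 1{v ≤ f x} ≤ 1{v ≤ u x}`, and the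
squared width of this bracket is the indicator of the band `l x < v ≤ u x`, which lies in the
strip `|v - l x| ≤ r`. A conditional density bounded by `M` gives that strip mass at most `2Mr`,
so an `‖·‖_∞`-bracket of width `ε² / (2M)` yields an `L²(P)`-bracket of width `ε`, and the
brackets are transported one for one.
-/

open MeasureTheory Set

section SubgraphIndicator

variable {α : Type*}

noncomputable def subgraphIndicator (g : α → ℝ) (q : α × ℝ) : ℝ := if q.2 ≤ g q.1 then 1 else 0

theorem subgraphIndicator_mono {f g : α → ℝ} (h : f ≤ g) :
    subgraphIndicator f ≤ subgraphIndicator g := by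
  intro q
  unfold subgraphIndicator
  split_ifs with hf hg
  · rfl
  · exact absurd (hf.trans (h q.1)) hg
  · exact zero_le_one
  · rfl

theorem sq_sub_subgraphIndicator_eq_indicator {l u : α → ℝ} (h : l ≤ u) :
    (fun q => (subgraphIndicator u q - subgraphIndicator l q) ^ 2) =
      {q : α × ℝ | l q.1 < q.2 ∧ q.2 ≤ u q.1}.indicator 1 := by
  funext q
  by_cases hl : q.2 ≤ l q.1
  · have hu : q.2 ≤ u q.1 := hl.trans (h q.1)
    simp [subgraphIndicator, hl, hu]
  · by_cases hu : q.2 ≤ u q.1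
    · simp [subgraphIndicator, hl, hu, not_le.mp hl]
    · simp [subgraphIndicator, hl, hu]

variable [MeasurableSpace α]

theorem integral_sq_sub_subgraphIndicator_le {P : Measure (α × ℝ)} {l u : α → ℝ}
    (hl : Measurable l) (hu : Measurable u) (hlu : l ≤ u) {r c : ℝ} (hr : ∀ x, u x - l x ≤ r)
    (hc : 0 ≤ c) (hstrip : P {q | |q.2 - l q.1| ≤ r} ≤ ENNReal.ofReal c) :
    ∫ q, (subgraphIndicator u q - subgraphIndicator l q) ^ 2 ∂P ≤ c := by
  have hband : MeasurableSet {q : α × ℝ | l q.1 < q.2 ∧ q.2 ≤ u q.1} :=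
    (measurableSet_lt (hl.comp measurable_fst) measurable_snd).inter
      (measurableSet_le measurable_snd (hu.comp measurable_fst))
  have hsub : {q : α × ℝ | l q.1 < q.2 ∧ q.2 ≤ u q.1} ⊆ {q | |q.2 - l q.1| ≤ r} := by
    rintro q ⟨hlq, hqu⟩
    have := hr q.1
    show |q.2 - l q.1| ≤ r
    rw [abs_le]
    constructor <;> linarith
  rw [sq_sub_subgraphIndicator_eq_indicator hlu, integral_indicator_one hband]
  calc P.real _ ≤ P.real {q | |q.2 - l q.1| ≤ r} :=
        measureReal_mono hsub (ne_top_of_le_ne_top ENNReal.ofReal_ne_top hstrip)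
    _ ≤ c := ENNReal.toReal_le_of_le_ofReal hc hstrip

end SubgraphIndicator

theorem stmt9 (k : ℕ) (M : ℝ) (hM : 0 < M) :
    ∃ C > 0, ∀ (P : Measure ((Fin k → ℝ) × ℝ)), IsProbabilityMeasure P →
      (∀ g : (Fin k → ℝ) → ℝ, Measurable g → ∀ r : ℝ, 0 ≤ r →
        P {p | |p.2 - g p.1| ≤ r} ≤ ENNReal.ofReal (2 * M * r)) →
      ∀ 𝓕 : Set ((Fin k → ℝ) → ℝ), (∀ f ∈ 𝓕, Measurable f) →
      ∀ ε : ℝ, 0 < ε →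
      ∀ B𝓕 : Finset (((Fin k → ℝ) → ℝ) × (((Fin k → ℝ) → ℝ))),
        (∀ p ∈ B𝓕, Measurable p.1 ∧ Measurable p.2) →
        (∀ f ∈ 𝓕, ∃ p ∈ B𝓕, (∀ x, p.1 x ≤ f x ∧ f x ≤ p.2 x) ∧
          ∀ x, p.2 x - p.1 x ≤ C * ε ^ 2) →
        ∃ B𝓖 : Finset ((((Fin k → ℝ) × ℝ) → ℝ) × (((Fin k → ℝ) × ℝ) → ℝ)),
          (∀ g ∈ {g | ∃ f ∈ 𝓕, g = fun p : (Fin k → ℝ) × ℝ => if p.2 ≤ f p.1 then (1:ℝ) else 0},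
            ∃ p ∈ B𝓖, (∀ q, p.1 q ≤ g q ∧ g q ≤ p.2 q) ∧
              ∫ q, (p.2 q - p.1 q) ^ 2 ∂P ≤ ε ^ 2) ∧
          B𝓖.card ≤ B𝓕.card := by
  classical
  refine ⟨(2 * M)⁻¹, by positivity, ?_⟩
  intro P _ hstrip 𝓕 _ ε _ B𝓕 hBmeas hBracket
  refine ⟨B𝓕.image fun p => (subgraphIndicator p.1, subgraphIndicator p.2), ?_,
    Finset.card_image_le⟩
  rintro _ ⟨f, hf, rfl⟩
  obtain ⟨p, hpB, hlfu, hwidth⟩ := hBracket f hf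
  obtain ⟨hl, hu⟩ := hBmeas p hpB
  have hlf : p.1 ≤ f := fun x => (hlfu x).1
  have hfu : f ≤ p.2 := fun x => (hlfu x).2
  refine ⟨_, Finset.mem_image_of_mem _ hpB,
    fun q => ⟨subgraphIndicator_mono hlf q, subgraphIndicator_mono hfu q⟩, ?_⟩
  have hr : 0 ≤ (2 * M)⁻¹ * ε ^ 2 := by positivity
  refine integral_sq_sub_subgraphIndicator_le hl hu (hlf.trans hfu) hwidth (sq_nonneg ε) ?_
  convert hstrip p.1 hl _ hr using 2
  field_simp
end

section
/- Let X and Z be independent random variables (X ∈ ℝ^d, Z ∈ ℝ^q), ε a random variable such that (X, ε) is independent of Z, and τ ∈ (0,1) with P(ε ≤ 0 | X) = τ almost surely. Define, for measurable sets Θ₁, Θ₂ ⊆ ℝ^d and y, z ∈ ℝ^q, W_{Θ,z} := (1{ε ≤ 0} − τ)·1{X ∈ Θ}·(1{Z ≤ z} − F_Z(z)), where F_Z is the distribution function of Z and Z ≤ z is coordinatewise. Then Cov(W_{Θ₁,y}, W_{Θ₂,z}) = τ(1−τ) · P(X ∈ Θ₁ ∩ Θ₂) · (F_Z(y ∧ z)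 − F_Z(y)F_Z(z)), where y ∧ z denotes the coordinatewise minimum. -/
open MeasureTheory Set

/-! `W_{Θ,z}` factors as `g_Θ(X, ε) · h_z(Z)`, and `(X, ε)` is independent of `Z`, so every
moment of the `W`'s splits into an `(X, ε)`-part times a `Z`-part. As `E h_z(Z) = 0`, both means
vanish, and the mixed moment is `E[(1{ε ≤ 0} − τ)² 1{X ∈ Θ₁ ∩ Θ₂}] · Cov(1{Z ≤ y}, 1{Z ≤ z})`.
The first factor is `τ(1 − τ) P(X ∈ Θ₁ ∩ Θ₂)` because `(1_S − τ)² = (1 − 2τ) 1_S + τ²` and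
`P(ε ≤ 0, X ∈ Θ) = τ P(X ∈ Θ)`. -/

/-- The distribution function `F_Z(z) = P(Z ≤ z)` (coordinatewise inequality). -/
noncomputable def FZ {Ωs : Type*} [MeasurableSpace Ωs] (μ : Measure Ωs) {q : ℕ}
    (Z : Ωs → Fin q → ℝ) (z : Fin q → ℝ) : ℝ :=
  (μ {ω | Z ω ≤ z}).toReal

/-- The random variable `W_{Θ,z} = (1{ε ≤ 0} − τ)·1{X ∈ Θ}·(1{Z ≤ z} − F_Z(z))`. -/
noncomputable def Wfun {Ωs : Type*} [MeasurableSpace Ωs] (μ : Measure Ωs) {d q : ℕ}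
    (X : Ωs → Fin d → ℝ) (Z : Ωs → Fin q → ℝ) (e : Ωs → ℝ) (τ : ℝ)
    (Θ : Set (Fin d → ℝ)) (z : Fin q → ℝ) (ω : Ωs) : ℝ :=
  ({ω' | e ω' ≤ 0}.indicator (fun _ => (1:ℝ)) ω - τ) *
    ((X ⁻¹' Θ).indicator (fun _ => (1:ℝ)) ω) *
    ({ω' | Z ω' ≤ z}.indicator (fun _ => (1:ℝ)) ω - FZ μ Z z)

section CenteredIndicators

variable {Ω : Type*} [MeasurableSpace Ω] {μ : Measure Ω} {S T : Set Ω}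

lemma integral_indicator_one_sub_measureReal [IsProbabilityMeasure μ] (hS : MeasurableSet S) :
    ∫ ω, (S.indicator 1 ω - μ.real S) ∂μ = 0 := by
  rw [integral_sub ((integrable_const 1).indicator hS) (integrable_const _),
    integral_indicator_one hS, integral_const, probReal_univ, one_smul, sub_self]

lemma integral_centered_indicator_mul [IsProbabilityMeasure μ] (hS : MeasurableSet S)
    (hT : MeasurableSet T) :
    ∫ ω, (S.indicator 1 ω - μ.real S) * (T.indicator 1 ω - μ.real T) ∂μ =
      μ.real (S ∩ T) - μ.real S * μ.real T := by
  have hST : ∀ ω, (S.indicator 1 ω - μ.real S) * (T.indicator 1 ω - μ.real T) =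
      (S ∩ T).indicator 1 ω - μ.real T * S.indicator 1 ω - μ.real S * T.indicator 1 ω
        + μ.real S * μ.real T := by
    intro ω
    rw [inter_indicator_one, Pi.mul_apply]
    ring
  have iS : Integrable (S.indicator (1 : Ω → ℝ)) μ := (integrable_const 1).indicator hS
  have iT : Integrable (T.indicator (1 : Ω → ℝ)) μ := (integrable_const 1).indicator hT
  have iST : Integrable ((S ∩ T).indicator (1 : Ω → ℝ)) μ :=
    (integrable_const 1).indicator (hS.inter hT)
  simp_rw [hST]
  rw [integral_add, integral_sub, integral_sub, integral_const_mul, integral_const_mul,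
    integral_indicator_one hS, integral_indicator_one hT, integral_indicator_one (hS.inter hT),
    integral_const, probReal_univ, one_smul]
  · ring
  all_goals fun_prop

lemma integral_sq_indicator_sub_mul_indicator [IsFiniteMeasure μ] {τ : ℝ}
    (hS : MeasurableSet S) (hT : MeasurableSet T) (hST : μ.real (S ∩ T) = τ * μ.real T) :
    ∫ ω, (S.indicator 1 ω - τ) ^ 2 * T.indicator 1 ω ∂μ = τ * (1 - τ) * μ.real T := by
  have hsq : ∀ ω, (S.indicator 1 ω - τ) ^ 2 * T.indicator 1 ω =
      (1 - 2 * τ) * (S ∩ T).indicator 1 ω + τ ^ 2 * T.indicator (1 : Ω → ℝ) ω := by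
    intro ω
    by_cases hω : ω ∈ S
    · simp only [inter_indicator_one, Pi.mul_apply, indicator_of_mem hω, Pi.one_apply]
      ring
    · simp [hω]
  have iT : Integrable (T.indicator (1 : Ω → ℝ)) μ := (integrable_const 1).indicator hT
  have iST : Integrable ((S ∩ T).indicator (1 : Ω → ℝ)) μ :=
    (integrable_const 1).indicator (hS.inter hT)
  simp_rw [hsq]
  rw [integral_add (iST.const_mul _) (iT.const_mul _), integral_const_mul, integral_const_mul,
    integral_indicator_one hT, integral_indicator_one (hS.inter hT), hST]
  ring

end CenteredIndicators

section QuantileScore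

variable {Ω : Type*} [MeasurableSpace Ω] {μ : Measure Ω} {d q : ℕ}
  {X : Ω → Fin d → ℝ} {Z : Ω → Fin q → ℝ} {e : Ω → ℝ} {τ : ℝ}

noncomputable def quantileScore (τ : ℝ) (Θ : Set (Fin d → ℝ)) (p : (Fin d → ℝ) × ℝ) : ℝ :=
  ((Iic 0).indicator 1 p.2 - τ) * Θ.indicator 1 p.1

noncomputable def centeredCdfIndicator (μ : Measure Ω) (Z : Ω → Fin q → ℝ) (w x : Fin q → ℝ) :
    ℝ :=
  (Iic w).indicator 1 x - FZ μ Z w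

lemma Wfun_eq_mul (Θ : Set (Fin d → ℝ)) (w : Fin q → ℝ) (ω : Ω) :
    Wfun μ X Z e τ Θ w ω =
      quantileScore τ Θ (X ω, e ω) * centeredCdfIndicator μ Z w (Z ω) :=
  rfl

lemma measurable_quantileScore {Θ : Set (Fin d → ℝ)} (hΘ : MeasurableSet Θ) :
    Measurable (quantileScore τ Θ) :=
  ((measurable_const.indicator measurableSet_Iic).comp measurable_snd |>.sub_const _).mul
    ((measurable_const.indicator hΘ).comp measurable_fst)

lemma measurable_centeredCdfIndicator (w : Fin q → ℝ) :
    Measurable (centeredCdfIndicator μ Z w) :=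
  (measurable_const.indicator measurableSet_Iic).sub_const _

lemma integral_centeredCdfIndicator [IsProbabilityMeasure μ] (hZ : Measurable Z)
    (w : Fin q → ℝ) :
    ∫ ω, centeredCdfIndicator μ Z w (Z ω) ∂μ = 0 :=
  integral_indicator_one_sub_measureReal (hZ measurableSet_Iic)

lemma integral_centeredCdfIndicator_mul [IsProbabilityMeasure μ] (hZ : Measurable Z)
    (y z : Fin q → ℝ) :
    ∫ ω, centeredCdfIndicator μ Z y (Z ω) * centeredCdfIndicator μ Z z (Z ω) ∂μ =
      FZ μ Z (y ⊓ z) - FZ μ Z y * FZ μ Z z := by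
  have hyz : {ω | Z ω ≤ y ⊓ z} = {ω | Z ω ≤ y} ∩ {ω | Z ω ≤ z} := by
    simp only [le_inf_iff, ofPred_and]
  rw [FZ, hyz, ← measureReal_def]
  exact integral_centered_indicator_mul (hZ measurableSet_Iic) (hZ measurableSet_Iic)

lemma integral_quantileScore_mul [IsFiniteMeasure μ] (hX : Measurable X) (he : Measurable e)
    (hτ : 0 ≤ τ) {Θ₁ Θ₂ : Set (Fin d → ℝ)} (hΘ : MeasurableSet (Θ₁ ∩ Θ₂))
    (hcond : μ ({ω | e ω ≤ 0} ∩ X ⁻¹' (Θ₁ ∩ Θ₂)) = ENNReal.ofReal τ * μ (X ⁻¹' (Θ₁ ∩ Θ₂))) :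
    ∫ ω, quantileScore τ Θ₁ (X ω, e ω) * quantileScore τ Θ₂ (X ω, e ω) ∂μ =
      τ * (1 - τ) * μ.real (X ⁻¹' (Θ₁ ∩ Θ₂)) := by
  have hsq : ∀ ω, quantileScore τ Θ₁ (X ω, e ω) * quantileScore τ Θ₂ (X ω, e ω) =
      ({ω | e ω ≤ 0}.indicator 1 ω - τ) ^ 2 * (X ⁻¹' (Θ₁ ∩ Θ₂)).indicator 1 ω := by
    intro ω
    change ({ω | e ω ≤ 0}.indicator 1 ω - τ) * (X ⁻¹' Θ₁).indicator 1 ω *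
      (({ω | e ω ≤ 0}.indicator 1 ω - τ) * (X ⁻¹' Θ₂).indicator 1 ω) = _
    rw [preimage_inter, inter_indicator_one, Pi.mul_apply]
    ring
  simp_rw [hsq]
  refine integral_sq_indicator_sub_mul_indicator (he measurableSet_Iic) (hX hΘ) ?_
  rw [measureReal_def, measureReal_def, hcond, ENNReal.toReal_mul, ENNReal.toReal_ofReal hτ]

lemma integral_Wfun_mul_Wfun (hX : Measurable X) (hZ : Measurable Z) (he : Measurable e)
    (hindep : ProbabilityTheory.IndepFun (fun ω => (X ω, e ω)) Z μ) {Θ₁ Θ₂ : Set (Fin d → ℝ)} (hΘ₁ : MeasurableSet Θ₁)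
    (hΘ₂ : MeasurableSet Θ₂) (y z : Fin q → ℝ) :
    ∫ ω, Wfun μ X Z e τ Θ₁ y ω * Wfun μ X Z e τ Θ₂ z ω ∂μ =
      (∫ ω, quantileScore τ Θ₁ (X ω, e ω) * quantileScore τ Θ₂ (X ω, e ω) ∂μ) *
        ∫ ω, centeredCdfIndicator μ Z y (Z ω) * centeredCdfIndicator μ Z z (Z ω) ∂μ := by
  have hmul : ∀ ω, Wfun μ X Z e τ Θ₁ y ω * Wfun μ X Z e τ Θ₂ z ω =
      (quantileScore τ Θ₁ * quantileScore τ Θ₂) (X ω, e ω) *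
        (centeredCdfIndicator μ Z y * centeredCdfIndicator μ Z z) (Z ω) := by
    intro ω
    rw [Wfun_eq_mul, Wfun_eq_mul, Pi.mul_apply, Pi.mul_apply]
    ring
  simp_rw [hmul]
  exact hindep.integral_fun_comp_mul_comp (hX.prodMk he).aemeasurable hZ.aemeasurable
    ((measurable_quantileScore hΘ₁).mul (measurable_quantileScore hΘ₂)).aestronglyMeasurable
    ((measurable_centeredCdfIndicator y).mul (measurable_centeredCdfIndicator z)).aestronglyMeasurable

lemma integral_Wfun [IsProbabilityMeasure μ] (hX : Measurable X) (hZ : Measurable Z)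
    (he : Measurable e) (hindep : ProbabilityTheory.IndepFun (fun ω => (X ω, e ω)) Z μ) {Θ : Set (Fin d → ℝ)} (hΘ : MeasurableSet Θ)
    (w : Fin q → ℝ) :
    ∫ ω, Wfun μ X Z e τ Θ w ω ∂μ = 0 := by
  simp_rw [Wfun_eq_mul]
  rw [hindep.integral_fun_comp_mul_comp (hX.prodMk he).aemeasurable hZ.aemeasurable
    (measurable_quantileScore hΘ).aestronglyMeasurable
    (measurable_centeredCdfIndicator w).aestronglyMeasurable,
    integral_centeredCdfIndicator hZ, mul_zero]

end QuantileScore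

theorem stmt14 {Ωs : Type*} [MeasurableSpace Ωs] (μ : Measure Ωs) [IsProbabilityMeasure μ]
    (d q : ℕ) (X : Ωs → Fin d → ℝ) (Z : Ωs → Fin q → ℝ) (e : Ωs → ℝ) (τ : ℝ)
    (hτ : τ ∈ Set.Ioo (0:ℝ) 1)
    (hX : Measurable X) (hZ : Measurable Z) (he : Measurable e)
    (hindep : ProbabilityTheory.IndepFun (fun ω => (X ω, e ω)) Z μ)
    (hcond : ∀ Θ : Set (Fin d → ℝ), MeasurableSet Θ →
      μ ({ω | e ω ≤ 0} ∩ X ⁻¹' Θ) = ENNReal.ofReal τ * μ (X ⁻¹' Θ))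
    (Θ₁ Θ₂ : Set (Fin d → ℝ)) (hΘ₁ : MeasurableSet Θ₁) (hΘ₂ : MeasurableSet Θ₂)
    (y z : Fin q → ℝ) :
    (∫ ω, Wfun μ X Z e τ Θ₁ y ω * Wfun μ X Z e τ Θ₂ z ω ∂μ) -
        (∫ ω, Wfun μ X Z e τ Θ₁ y ω ∂μ) * (∫ ω, Wfun μ X Z e τ Θ₂ z ω ∂μ) =
      τ * (1 - τ) * (μ (X ⁻¹' (Θ₁ ∩ Θ₂))).toReal *
        (FZ μ Z (y ⊓ z) - FZ μ Z y * FZ μ Z z) := by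
  have hΘ : MeasurableSet (Θ₁ ∩ Θ₂) := hΘ₁.inter hΘ₂
  rw [integral_Wfun_mul_Wfun hX hZ he hindep hΘ₁ hΘ₂,
    integral_Wfun hX hZ he hindep hΘ₁, integral_Wfun hX hZ he hindep hΘ₂,
    integral_quantileScore_mul hX he hτ.1.le hΘ (hcond _ hΘ),
    integral_centeredCdfIndicator_mul hZ, measureReal_def]
  ring
end
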